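/- The Whitley thickness constant is continuous with respect to the Kadets metric: |T(X) − T(Y)| ≤ 8·d_K(X, Y) for all infinite-dimensional Banach spaces X and Y. -/

import Mathlib

noncomputable section
open Metric Set

/-- The Kottman constant of a normed space. -/
def kottman (X : Type*) [NormedAddCommGroup X] : ℝ :=
  sSup {σ : ℝ | 0 < σ ∧ ∃ x : ℕ → X, (∀ n, ‖x n‖ ≤ 1) ∧
    ∀ n m, n ≠ m → σ ≤ ‖x n - x m‖}

def symKottman (X : Type*) [NormedAddCommGroup X] : ℝ :=
  sSup {σ : ℝ | 0 < σ ∧ ∃ x : ℕ → X, (∀ n, ‖x n‖ ≤ 1) ∧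
    ∀ n m, n ≠ m → σ ≤ ‖x n - x m‖ ∧ σ ≤ ‖x n + x m‖}

def finKottman (X : Type*) [NormedAddCommGroup X] : ℝ :=
  sSup {σ : ℝ | 0 < σ ∧ ∀ N : ℕ, ∃ x : Fin N → X, (∀ n, ‖x n‖ ≤ 1) ∧
    ∀ n m, n ≠ m → σ ≤ ‖x n - x m‖}

/-- The gap between two subsets (typically closed subspaces) of a normed space,
measured between their unit balls. -/
def gap {Z : Type*} [NormedAddCommGroup Z] (M N : Set Z) : ℝ :=
  max (sSup ((fun x => Metric.infDist x (N ∩ Metric.closedBall 0 1)) '' (M ∩ Metric.closedBall 0 1)))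
      (sSup ((fun y => Metric.infDist y (M ∩ Metric.closedBall 0 1)) '' (N ∩ Metric.closedBall 0 1)))

/-- The Kadets distance between two Banach spaces. -/
def kadets (X Y : Type*) [NormedAddCommGroup X] [NormedSpace ℝ X]
    [NormedAddCommGroup Y] [NormedSpace ℝ Y] : ℝ :=
  sInf {d : ℝ | ∃ (W : Type) (nW : NormedAddCommGroup W) (sW : NormedSpace ℝ W)
    (cW : CompleteSpace W) (i : X →ₗᵢ[ℝ] W) (j : Y →ₗᵢ[ℝ] W),
    d = gap (Set.range i) (Set.range j)}

/-- The isomorphic Kottman constant: infimum of Kottman constants over all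
Banach spaces isomorphic to `X`. -/
def ikottman (X : Type) [NormedAddCommGroup X] [NormedSpace ℝ X] : ℝ :=
  sInf {k : ℝ | ∃ (V : Type) (nV : NormedAddCommGroup V) (sV : NormedSpace ℝ V)
    (cV : CompleteSpace V) (e : X ≃L[ℝ] V), k = kottman V}

/-- Whitley's thickness constant. -/
def whitley (X : Type*) [NormedAddCommGroup X] : ℝ :=
  sInf {ε : ℝ | 0 < ε ∧ ∃ F : Finset X, (∀ f ∈ F, ‖f‖ = 1) ∧
    ∀ x : X, ‖x‖ = 1 → ∃ f ∈ F, ‖x - f‖ ≤ ε}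

/-- The James constant. -/
def james (X : Type*) [NormedAddCommGroup X] : ℝ :=
  sSup {t : ℝ | ∃ x y : X, ‖x‖ = 1 ∧ ‖y‖ = 1 ∧ t = min ‖x - y‖ ‖x + y‖}

def gconst (X : Type*) [NormedAddCommGroup X] : ℝ :=
  sInf {t : ℝ | ∃ x y : X, ‖x‖ = 1 ∧ ‖y‖ = 1 ∧ t = max ‖x - y‖ ‖x + y‖}

section Aux

lemma norm_normalize {E : Type*} [NormedAddCommGroup E] [NormedSpace ℝ E]
    {x : E} (hx : x ≠ 0) : ‖‖x‖⁻¹ • x‖ = 1 := by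
  rw [norm_smul, norm_inv, norm_norm, inv_mul_cancel₀ (norm_ne_zero_iff.mpr hx)]

lemma norm_sub_unit_smul {E : Type*} [NormedAddCommGroup E] [NormedSpace ℝ E]
    {u v : E} (hu : ‖u‖ = 1) (hv : v ≠ 0) :
    ‖u - ‖v‖⁻¹ • v‖ ≤ 2 * ‖u - v‖ := by
  have hv0 : 0 < ‖v‖ := norm_pos_iff.mpr hv
  have h1 : ‖v - ‖v‖⁻¹ • v‖ = |‖v‖ - 1| := by
    have h : v - ‖v‖⁻¹ • v = (1 - ‖v‖⁻¹) • v := by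
      rw [sub_smul, one_smul]
    rw [h, norm_smul, Real.norm_eq_abs, ← abs_of_pos hv0, ← abs_mul]
    congr 1
    field_simp
    rw [abs_of_pos hv0]; ring
  have h2 : |‖v‖ - 1| ≤ ‖u - v‖ := by
    have := abs_norm_sub_norm_le v u
    rw [norm_sub_rev] at this
    simpa [hu] using this
  calc ‖u - ‖v‖⁻¹ • v‖ ≤ ‖u - v‖ + ‖v - ‖v‖⁻¹ • v‖ := by
        have := dist_triangle u v (‖v‖⁻¹ • v)
        simpa [dist_eq_norm] using this
    _ ≤ 2 * ‖u - v‖ := by rw [h1]; linarith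

end Aux

def wset (X : Type*) [NormedAddCommGroup X] : Set ℝ :=
  {ε : ℝ | 0 < ε ∧ ∃ F : Finset X, (∀ f ∈ F, ‖f‖ = 1) ∧
    ∀ x : X, ‖x‖ = 1 → ∃ f ∈ F, ‖x - f‖ ≤ ε}

lemma wset_bddBelow (X : Type*) [NormedAddCommGroup X] : BddBelow (wset X) :=
  ⟨0, fun _ hε => hε.1.le⟩

lemma two_mem_wset (X : Type*) [NormedAddCommGroup X] [NormedSpace ℝ X] [Nontrivial X] :
    (2 : ℝ) ∈ wset X := by
  obtain ⟨x0, hx0⟩ := exists_norm_eq X (zero_le_one)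
  refine ⟨two_pos, {x0}, by simp [hx0], fun x hx => ⟨x0, Finset.mem_singleton_self x0, ?_⟩⟩
  calc ‖x - x0‖ ≤ ‖x‖ + ‖x0‖ := norm_sub_le _ _
    _ = 2 := by rw [hx, hx0]; norm_num

lemma nontrivial_of_not_fd {X : Type*} [NormedAddCommGroup X] [NormedSpace ℝ X]
    (hX : ¬ FiniteDimensional ℝ X) : Nontrivial X := by
  by_contra hn
  rw [not_nontrivial_iff_subsingleton] at hn
  exact hX inferInstance

lemma whitley_le_two (X : Type*) [NormedAddCommGroup X] [NormedSpace ℝ X] [Nontrivial X] :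
    whitley X ≤ 2 := csInf_le (wset_bddBelow X) (two_mem_wset X)

lemma one_le_whitley (X : Type*) [NormedAddCommGroup X] [NormedSpace ℝ X]
    (hX : ¬ FiniteDimensional ℝ X) : 1 ≤ whitley X := by
  haveI := nontrivial_of_not_fd hX
  refine le_csInf ⟨2, two_mem_wset X⟩ ?_
  rintro ε ⟨hε, F, hF1, hF2⟩
  by_contra hlt
  push_neg at hlt
  set r : ℝ := (1 + ε) / 2 with hr
  have hr1 : r < 1 := by rw [hr]; linarith
  have hεr : ε < r := by rw [hr]; linarith
  set Fs : Submodule ℝ X := Submodule.span ℝ (F : Set X) with hFs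
  haveI : FiniteDimensional ℝ Fs := by
    apply FiniteDimensional.span_of_finite
    exact F.finite_toSet
  have hclosed := Fs.closed_of_finiteDimensional
  have hex : ∃ x : X, x ∉ Fs := by
    by_contra hall
    push_neg at hall
    apply hX
    have htop : Fs = ⊤ := eq_top_iff.mpr fun x _ => hall x
    have hsurj : Function.Surjective Fs.subtype :=
      fun x => ⟨⟨x, htop ▸ Submodule.mem_top⟩, rfl⟩
    exact Module.Finite.of_surjective Fs.subtype hsurj
  obtain ⟨x0, hx0n, hx0⟩ := riesz_lemma hclosed hex hr1
  have hx00 : x0 ≠ 0 := fun h => hx0n (h ▸ Fs.zero_mem)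
  have hn0 : 0 < ‖x0‖ := norm_pos_iff.mpr hx00
  obtain ⟨f, hfF, hf⟩ := hF2 (‖x0‖⁻¹ • x0) (by
    rw [norm_smul, norm_inv, norm_norm, inv_mul_cancel₀ hn0.ne'])
  have hfFs : (‖x0‖ : ℝ) • f ∈ Fs := Fs.smul_mem _ (Submodule.subset_span hfF)
  have hkey := hx0 _ hfFs
  have heq : ‖x0 - ‖x0‖ • f‖ = ‖x0‖ * ‖‖x0‖⁻¹ • x0 - f‖ := by
    have h : (‖x0‖ : ℝ) • (‖x0‖⁻¹ • x0 - f) = x0 - ‖x0‖ • f := by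
      rw [smul_sub, smul_smul, mul_inv_cancel₀ hn0.ne', one_smul]
    rw [← h, norm_smul, Real.norm_eq_abs, abs_of_pos hn0]
  rw [heq] at hkey
  have : r ≤ ε := by
    have h1 : r * ‖x0‖ ≤ ε * ‖x0‖ := by
      calc r * ‖x0‖ ≤ ‖x0‖ * ‖‖x0‖⁻¹ • x0 - f‖ := hkey
        _ ≤ ‖x0‖ * ε := by
            exact mul_le_mul_of_nonneg_left hf hn0.le
        _ = ε * ‖x0‖ := mul_comm _ _
    exact le_of_mul_le_mul_right h1 hn0
  linarith

lemma gap_comm {Z : Type*} [NormedAddCommGroup Z] (M N : Set Z) : gap M N = gap N M :=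
  max_comm _ _

lemma infDist_le_sSup_aux {Z : Type*} [NormedAddCommGroup Z] {M N : Set Z}
    (h0M : (0 : Z) ∈ M) {u : Z} (hu : u ∈ N ∩ Metric.closedBall 0 1) :
    Metric.infDist u (M ∩ Metric.closedBall 0 1) ≤
      sSup ((fun y => Metric.infDist y (M ∩ Metric.closedBall 0 1)) '' (N ∩ Metric.closedBall 0 1)) := by
  have h0 : (0 : Z) ∈ M ∩ Metric.closedBall 0 1 := ⟨h0M, by simp⟩
  refine le_csSup ⟨1, ?_⟩ (Set.mem_image_of_mem _ hu)
  rintro v ⟨z, hz, rfl⟩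
  calc Metric.infDist z (M ∩ Metric.closedBall 0 1) ≤ dist z 0 := Metric.infDist_le_dist_of_mem h0
    _ ≤ 1 := by simpa [dist_zero_right] using mem_closedBall_zero_iff.mp hz.2

lemma gap_nonneg {Z : Type*} [NormedAddCommGroup Z] {M N : Set Z}
    (h0M : (0 : Z) ∈ M) (h0N : (0 : Z) ∈ N) : 0 ≤ gap M N := by
  refine le_trans (Real.sSup_nonneg ?_) (le_max_left _ _)
  rintro v ⟨z, _, rfl⟩
  exact Metric.infDist_nonneg

/-- key approximation: if `u` is a unit vector whose distance to the unit ball of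
`range i` is at most `c`, then there is a unit vector `x` with `‖u - i x‖ ≤ 2(c+δ)`. -/
lemma gap_approx {W : Type*} [NormedAddCommGroup W] [NormedSpace ℝ W]
    {E : Type*} [NormedAddCommGroup E] [NormedSpace ℝ E]
    (i : E →ₗᵢ[ℝ] W) {u : W} (hu : ‖u‖ = 1) {c δ : ℝ} (hδ : 0 < δ) (hcd : c + δ < 1)
    (hinf : Metric.infDist u (Set.range ⇑i ∩ Metric.closedBall 0 1) ≤ c) :
    ∃ x : E, ‖x‖ = 1 ∧ ‖u - i x‖ ≤ 2 * (c + δ) := by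
  have hne : (Set.range ⇑i ∩ Metric.closedBall 0 1).Nonempty :=
    ⟨0, ⟨0, map_zero i⟩, by simp⟩
  have hlt : Metric.infDist u (Set.range ⇑i ∩ Metric.closedBall 0 1) < c + δ :=
    lt_of_le_of_lt hinf (lt_add_of_pos_right c hδ)
  obtain ⟨m, hm, hdm⟩ := (Metric.infDist_lt_iff hne).mp hlt
  obtain ⟨⟨x0, rfl⟩, _⟩ := hm
  rw [dist_eq_norm] at hdm
  have hx0 : x0 ≠ 0 := by
    rintro rfl
    rw [map_zero, sub_zero, hu] at hdm
    linarith
  have hix0 : i x0 ≠ 0 := fun h => hx0 (i.injective (h.trans (map_zero i).symm))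
  refine ⟨‖x0‖⁻¹ • x0, norm_normalize hx0, ?_⟩
  have h1 : i (‖x0‖⁻¹ • x0) = ‖i x0‖⁻¹ • i x0 := by
    rw [map_smul, i.norm_map]
  rw [h1]
  calc ‖u - ‖i x0‖⁻¹ • i x0‖ ≤ 2 * ‖u - i x0‖ := norm_sub_unit_smul hu hix0
    _ ≤ 2 * (c + δ) := by linarith


lemma whitley_le_of_embed {W X Y : Type*} [NormedAddCommGroup W] [NormedSpace ℝ W]
    [NormedAddCommGroup X] [NormedSpace ℝ X]
    [NormedAddCommGroup Y] [NormedSpace ℝ Y]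
    (hX : ¬ FiniteDimensional ℝ X) (hY : ¬ FiniteDimensional ℝ Y)
    (i : X →ₗᵢ[ℝ] W) (j : Y →ₗᵢ[ℝ] W) :
    whitley X ≤ whitley Y + 8 * gap (Set.range ⇑i) (Set.range ⇑j) := by
  classical
  haveI := nontrivial_of_not_fd hX
  haveI := nontrivial_of_not_fd hY
  set g := gap (Set.range ⇑i) (Set.range ⇑j) with hgdef
  have h0i : (0 : W) ∈ Set.range ⇑i := ⟨0, map_zero i⟩
  have h0j : (0 : W) ∈ Set.range ⇑j := ⟨0, map_zero j⟩
  have hg0 : 0 ≤ g := gap_nonneg h0i h0j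
  by_cases hbig : (1 : ℝ) ≤ 8 * g
  · have h2 := whitley_le_two X
    have h1 := one_le_whitley Y hY
    linarith
  push_neg at hbig
  have hg8 : g < 1 / 8 := by linarith
  have key : ∀ δ : ℝ, 0 < δ → δ < 1 / 2 → whitley X ≤ whitley Y + (4 * g + 4 * δ) := by
    intro δ hδ hδ2
    have hgd : g + δ < 1 := by linarith
    have step : ∀ ε ∈ wset Y, whitley X ≤ ε + (4 * g + 4 * δ) := by
      rintro ε ⟨hε, F, hF1, hF2⟩
      have hφ : ∀ f : Y, ∃ x : X, ‖f‖ = 1 → (‖x‖ = 1 ∧ ‖j f - i x‖ ≤ 2 * (g + δ)) := by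
        intro f
        by_cases hf : ‖f‖ = 1
        · have hu : ‖j f‖ = 1 := by rw [j.norm_map]; exact hf
          have hmem : j f ∈ Set.range ⇑j ∩ Metric.closedBall 0 1 :=
            ⟨Set.mem_range_self f, by simp [mem_closedBall_zero_iff, hu]⟩
          have hinf : Metric.infDist (j f) (Set.range ⇑i ∩ Metric.closedBall 0 1) ≤ g :=
            le_trans (infDist_le_sSup_aux h0i hmem) (le_max_right _ _)
          obtain ⟨x, hx1, hx2⟩ := gap_approx i hu hδ hgd hinf
          exact ⟨x, fun _ => ⟨hx1, hx2⟩⟩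
        · exact ⟨0, fun h => absurd h hf⟩
      choose φ hφ using hφ
      refine csInf_le (wset_bddBelow X) ⟨by linarith, F.image φ, ?_, ?_⟩
      · intro f' hf'
        obtain ⟨f, hf, rfl⟩ := Finset.mem_image.mp hf'
        exact (hφ f (hF1 f hf)).1
      · intro x hx
        have hux : ‖i x‖ = 1 := by rw [i.norm_map]; exact hx
        have hmem : i x ∈ Set.range ⇑i ∩ Metric.closedBall 0 1 :=
          ⟨Set.mem_range_self x, by simp [mem_closedBall_zero_iff, hux]⟩
        have hinf : Metric.infDist (i x) (Set.range ⇑j ∩ Metric.closedBall 0 1) ≤ g :=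
          le_trans (infDist_le_sSup_aux h0j hmem) (le_max_left _ _)
        obtain ⟨y, hy1, hy2⟩ := gap_approx j hux hδ hgd hinf
        obtain ⟨f, hfF, hfy⟩ := hF2 y hy1
        refine ⟨φ f, Finset.mem_image_of_mem φ hfF, ?_⟩
        have hφf := hφ f (hF1 f hfF)
        have hnorm : ‖x - φ f‖ = ‖i x - i (φ f)‖ := by rw [← map_sub, i.norm_map]
        have tri : ‖i x - i (φ f)‖ ≤ ‖i x - j y‖ + ‖j y - j f‖ + ‖j f - i (φ f)‖ := by
          have := dist_triangle4 (i x) (j y) (j f) (i (φ f))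
          simpa [dist_eq_norm] using this
        have hjy : ‖j y - j f‖ = ‖y - f‖ := by rw [← map_sub, j.norm_map]
        rw [hnorm]
        have hfy' : ‖j y - j f‖ ≤ ε := by rw [hjy]; exact hfy
        linarith [hφf.2]
    have h := le_csInf (s := wset Y) ⟨2, two_mem_wset Y⟩
      (a := whitley X - (4 * g + 4 * δ)) (fun ε hε => by linarith [step ε hε])
    have hwy : sInf (wset Y) = whitley Y := rfl
    linarith [hwy ▸ h]
  have hfin : ∀ ε : ℝ, 0 < ε → whitley X ≤ (whitley Y + 4 * g) + ε := by
    intro ε hε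
    rcases le_or_gt (1 / 2 : ℝ) (ε / 4) with h | h
    · have := key (1 / 4) (by norm_num) (by norm_num); linarith
    · have := key (ε / 4) (by linarith) (by linarith); linarith
  have := le_of_forall_pos_le_add hfin
  linarith

/-- The Whitley thickness constant is continuous with respect to the Kadets
metric: `|T(X) - T(Y)| ≤ 8 d_K(X,Y)`. -/
theorem abs_whitley_sub_whitley_le_eight_mul_kadets
    (X Y : Type) [NormedAddCommGroup X] [NormedSpace ℝ X] [CompleteSpace X]
    [NormedAddCommGroup Y] [NormedSpace ℝ Y] [CompleteSpace Y]
    (hX : ¬ FiniteDimensional ℝ X) (hY : ¬ FiniteDimensional ℝ Y) :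
    |whitley X - whitley Y| ≤ 8 * kadets X Y := by
  haveI : Nontrivial X := nontrivial_of_not_fd hX
  haveI : Nontrivial Y := nontrivial_of_not_fd hY
  let iP : X →ₗᵢ[ℝ] X × Y :=
    ⟨LinearMap.inl ℝ X Y, fun x => by
      simp [Prod.norm_def, max_eq_left (norm_nonneg x)]⟩
  let jP : Y →ₗᵢ[ℝ] X × Y :=
    ⟨LinearMap.inr ℝ X Y, fun y => by
      simp [Prod.norm_def, max_eq_right (norm_nonneg y)]⟩
  have hne : {d : ℝ | ∃ (W : Type) (nW : NormedAddCommGroup W) (sW : NormedSpace ℝ W)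
      (cW : CompleteSpace W) (i : X →ₗᵢ[ℝ] W) (j : Y →ₗᵢ[ℝ] W),
      d = gap (Set.range i) (Set.range j)}.Nonempty :=
    ⟨gap (Set.range ⇑iP) (Set.range ⇑jP),
      X × Y, inferInstance, inferInstance, inferInstance, iP, jP, rfl⟩
  have hmain : ∀ d ∈ {d : ℝ | ∃ (W : Type) (nW : NormedAddCommGroup W) (sW : NormedSpace ℝ W)
      (cW : CompleteSpace W) (i : X →ₗᵢ[ℝ] W) (j : Y →ₗᵢ[ℝ] W),
      d = gap (Set.range i) (Set.range j)},
      |whitley X - whitley Y| / 8 ≤ d := by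
    rintro d ⟨W, nW, sW, cW, i, j, rfl⟩
    have h1 := whitley_le_of_embed hX hY i j
    have h2 := whitley_le_of_embed hY hX j i
    rw [gap_comm] at h2
    have habs : |whitley X - whitley Y| ≤ 8 * gap (Set.range ⇑i) (Set.range ⇑j) :=
      abs_sub_le_iff.mpr ⟨by linarith, by linarith⟩
    linarith
  have hle := le_csInf hne hmain
  have hk : kadets X Y = sInf {d : ℝ | ∃ (W : Type) (nW : NormedAddCommGroup W)
      (sW : NormedSpace ℝ W) (cW : CompleteSpace W) (i : X →ₗᵢ[ℝ] W) (j : Y →ₗᵢ[ℝ] W),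
      d = gap (Set.range i) (Set.range j)} := rfl
  rw [hk]
  linarith
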